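/- The Witt superalgebra W(m,n) is generated by its local part: W = alg(W_{−1} + W_0 + W_1), i.e., the subalgebra generated by the components of degrees −1, 0 and 1 is all of W. -/

import Mathlib

/-!
The fields `x^(ν) ∂_i` span `W`, and `x^(ν) ∂_i` lies in `W_{|ν|-1}`, so it suffices to reach
each of them, by induction on `|ν|`. If `x^(ν)` is divisible by `x_t x_s` with `t, s ≠ i`, then
`[x_t x_s ∂_t, x^(ν - ε_s) ∂_i]` is a nonzero multiple of `x^(ν) ∂_i`, because `∂_i` kills
`x_t x_s`. Otherwise, for `|ν| ≥ 3`, the monomial is `x_i^(a)` (with `a ≥ 2`) times at most one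
other variable, and since `m + n ≥ 3` some `x_s`, `s ≠ i`, does not occur in it. Then
`[x_i^(2) ∂_s, x_s x^(ν - 2ε_i) ∂_i]` is a nonzero multiple of `x^(ν) ∂_i` plus a multiple of
`x^(ν - ε_i + ε_s) ∂_s`, which falls under the first case. The coefficients are signs and
binomial coefficients `(a + b).choose a` with `a + b < p`, hence nonzero in `F`.
-/

open Finset

namespace Cartan

/-- Monomial index set for the divided power superalgebra `O(m,n)`:
a multi-exponent `α : Fin m → Fin p` (divided powers truncated at `p-1`)
together with a subset of the odd variables. -/
abbrev Mon (p m n : ℕ) := (Fin m → Fin p) × Finset (Fin n)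

/-- The divided power superalgebra `O(m,n)` realized as coefficient functions on monomials. -/
abbrev O (F : Type*) [Field F] (p m n : ℕ) := Mon p m n → F

/-- The Witt superalgebra `W(m,n)` realized as tuples of coefficients:
`D : W` represents `∑ i, D i · ∂ i`. -/
abbrev W (F : Type*) [Field F] (p m n : ℕ) := Fin (m + n) → O F p m n

variable {F : Type*} [Field F] {p m n : ℕ}

/-- `ℤ₂`-parity of a monomial. -/
def parMon (μ : Mon p m n) : ZMod 2 := (μ.2.card : ZMod 2)

/-- `ℤ`-degree of a monomial (each variable has degree 1). -/
def zdMon (μ : Mon p m n) : ℕ := (∑ i, (μ.1 i : ℕ)) + μ.2.card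

/-- Parity of the index `i`: even if `i < m`, odd otherwise. -/
def parIdx (m : ℕ) {k : ℕ} (i : Fin k) : ZMod 2 := if (i : ℕ) < m then 0 else 1

/-- The constant function `1 ∈ O(m,n)`. -/
def oneO (F : Type*) [Field F] (p m n : ℕ) [NeZero p] : O F p m n :=
  fun μ => if μ.1 = 0 ∧ μ.2 = (∅ : Finset (Fin n)) then 1 else 0

/-- Koszul sign for multiplying exterior monomials `x^s · x^t`. -/
def extSign {n : ℕ} (s t : Finset (Fin n)) : ℤ :=
  (-1) ^ ∑ i ∈ t, (s.filter fun j => i < j).card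

/-- Multiplication of the divided power superalgebra `O(m,n)`:
`x^(α)x^u · x^(β)x^v = (Koszul sign) · ∏ binom(α+β,α) · x^(α+β) x^(u∪v)`. -/
def mulO [NeZero p] (f g : O F p m n) : O F p m n := fun μ =>
  ∑ ν : Mon p m n, ∑ κ : Mon p m n,
    if (∀ i, (ν.1 i : ℕ) + (κ.1 i : ℕ) = (μ.1 i : ℕ)) ∧ ν.2 ∩ κ.2 = ∅ ∧ ν.2 ∪ κ.2 = μ.2 then
      ((extSign ν.2 κ.2 : ℤ) : F) * (∏ i, (((μ.1 i : ℕ).choose (ν.1 i : ℕ) : ℕ) : F))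
        * f ν * g κ
    else 0

/-- The even partial superderivation `∂_i`, `i ≤ m`, on `O(m,n)`. -/
def dEv [NeZero p] (i : Fin m) (f : O F p m n) : O F p m n := fun μ =>
  if h : (μ.1 i : ℕ) + 1 < p then f (Function.update μ.1 i ⟨(μ.1 i : ℕ) + 1, h⟩, μ.2) else 0

/-- The odd partial superderivation `∂_{m+i}` on `O(m,n)`. -/
def dOd (i : Fin n) (f : O F p m n) : O F p m n := fun μ =>
  if i ∈ μ.2 then 0
  else ((-1 : F)) ^ (μ.2.filter fun j => j < i).card * f (μ.1, insert i μ.2)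

/-- The partial superderivation `∂_i`, `i ∈ I = {1,…,m+n}`. -/
def pd [NeZero p] (i : Fin (m + n)) (f : O F p m n) : O F p m n :=
  Sum.elim (fun j => dEv j f) (fun j => dOd j f) (finSumFinEquiv.symm i)

/-- The variable `x_i` as an element of `O(m,n)`. -/
def xVar [NeZero p] (i : Fin (m + n)) : O F p m n := fun μ =>
  if h : (i : ℕ) < m then
    (if μ.1 = Pi.single (⟨i, h⟩ : Fin m) 1 ∧ μ.2 = (∅ : Finset (Fin n)) then 1 else 0)
  else
    (if μ.1 = 0 ∧ μ.2 = {(⟨(i : ℕ) - m, by have := i.isLt; omega⟩ : Fin n)} then 1 else 0)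

/-- Projection of `f ∈ O(m,n)` onto its parity-`b` component. -/
def projO (b : ZMod 2) (f : O F p m n) : O F p m n :=
  fun μ => if parMon μ = b then f μ else 0

/-- Projection of `D ∈ W(m,n)` onto its parity-`b` component
(the parity of `f ∂_i` is `|f| + |∂_i|`). -/
def projW (b : ZMod 2) (D : W F p m n) : W F p m n :=
  fun i => projO (b + parIdx m i) (D i)

/-- `f` is `ℤ₂`-homogeneous of parity `b`. -/
def isParO (b : ZMod 2) (f : O F p m n) : Prop := ∀ μ, f μ ≠ 0 → parMon μ = b

/-- `D` is `ℤ₂`-homogeneous of parity `b`. -/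
def isParW (b : ZMod 2) (D : W F p m n) : Prop := ∀ i, isParO (b + parIdx m i) (D i)

/-- Action of a superderivation `D = ∑ f_i ∂_i` on `g ∈ O(m,n)`: `D(g) = ∑ f_i · ∂_i(g)`. -/
def act [NeZero p] (D : W F p m n) (g : O F p m n) : O F p m n :=
  ∑ i, mulO (D i) (pd i g)

/-- Super-commutator bracket on `W(m,n)`, extended bilinearly from homogeneous components:
`[D,E] = D∘E - (-1)^{|D||E|} E∘D`, recorded via values on the generators `x_k`. -/
def bracketW [NeZero p] (D E : W F p m n) : W F p m n :=
  ∑ a : ZMod 2, ∑ b : ZMod 2,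
    (fun k => act (projW a D) (projW b E k)
      - ((-1 : F)) ^ (a * b).val • act (projW b E) (projW a D k) : W F p m n)

/-- Divergence: `div(f ∂_i) = (-1)^{|f||∂_i|} ∂_i(f)`, extended linearly. -/
def divW [NeZero p] (D : W F p m n) : O F p m n :=
  ∑ i, ∑ b : ZMod 2, ((-1 : F)) ^ (b * parIdx m i).val • pd i (projO b (D i))

/-- The Euler (degree) derivation `𝔇 = ∑ x_k ∂_k`. -/
def euler (F : Type*) [Field F] (p m n : ℕ) [NeZero p] : W F p m n := fun i => xVar i

/-- The derivation `f𝔇 = ∑ (f·x_k) ∂_k`. -/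
def fEuler [NeZero p] (f : O F p m n) : W F p m n := fun i => mulO f (xVar i)

/-- `f` is `ℤ`-homogeneous of degree `s` (i.e. `f ∈ O_s`). -/
def inO (s : ℤ) (f : O F p m n) : Prop := ∀ μ, f μ ≠ 0 → (zdMon μ : ℤ) = s

/-- `D ∈ W_s` for the standard grading (`zd(f∂_i) = zd(f) - 1`). -/
def inW (s : ℤ) (D : W F p m n) : Prop := ∀ i, inO (s + 1) (D i)

/-- The superderivation `∂_i` as an element of `W(m,n)`. -/
def delOp (F : Type*) [Field F] (p m n : ℕ) [NeZero p] (i : Fin (m + n)) : W F p m n :=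
  fun k => if k = i then oneO F p m n else 0

/-- The `ℤ`-graded component `W_s` as a submodule. -/
def Wgrade (F : Type*) [Field F] (p m n : ℕ) (s : ℤ) : Submodule F (W F p m n) where
  carrier := {D | inW s D}
  add_mem' := by
    intro a b ha hb i μ h
    by_cases h1 : a i μ = 0
    · exact hb i μ (by simpa [h1] using h)
    · exact ha i μ h1
  zero_mem' := by intro i μ h; simp at h
  smul_mem' := by
    intro c a ha i μ h
    refine ha i μ (fun h1 => h ?_)
    simp [h1]


/-- The Lie subalgebra (over `F`) of `W(m,n)` generated by a subset `S`. -/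
inductive genBy [NeZero p] (S : Set (W F p m n)) : W F p m n → Prop
  | base {x : W F p m n} : x ∈ S → genBy S x
  | zero : genBy S 0
  | add {x y : W F p m n} : genBy S x → genBy S y → genBy S (x + y)
  | smul (c : F) {x : W F p m n} : genBy S x → genBy S (c • x)
  | br {x y : W F p m n} : genBy S x → genBy S y → genBy S (bracketW x y)

@[simp] lemma castAdd_ne_natAdd (i : Fin m) (k : Fin n) : Fin.castAdd n i ≠ Fin.natAdd m k := by
  simp [Fin.ext_iff]; omega

def expOf (μ : Mon p m n) : Fin (m + n) → ℕ :=
  Fin.append (fun k => (μ.1 k : ℕ)) (fun k => if k ∈ μ.2 then 1 else 0)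

def maxExp (p m n : ℕ) : Fin (m + n) → ℕ :=
  Fin.append (fun _ => p - 1) (fun _ => 1)

@[simp] lemma expOf_castAdd (μ : Mon p m n) (k : Fin m) : expOf μ (Fin.castAdd n k) = μ.1 k :=
  Fin.append_left _ _ k

@[simp] lemma expOf_natAdd (μ : Mon p m n) (k : Fin n) :
    expOf μ (Fin.natAdd m k) = if k ∈ μ.2 then 1 else 0 :=
  Fin.append_right _ _ k

@[simp] lemma maxExp_castAdd (k : Fin m) : maxExp p m n (Fin.castAdd n k) = p - 1 :=
  Fin.append_left _ _ k

@[simp] lemma maxExp_natAdd (k : Fin n) : maxExp p m n (Fin.natAdd m k) = 1 :=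
  Fin.append_right _ _ k

lemma one_le_maxExp (hp : 2 ≤ p) (j : Fin (m + n)) : 1 ≤ maxExp p m n j := by
  induction j using Fin.addCases <;> simp; omega

lemma expOf_le_maxExp (μ : Mon p m n) : expOf μ ≤ maxExp p m n := by
  intro j
  induction j using Fin.addCases with
  | left k => simpa using Nat.le_sub_one_of_lt (μ.1 k).isLt
  | right k => simp; split_ifs <;> simp

lemma expOf_injective : Function.Injective (expOf : Mon p m n → Fin (m + n) → ℕ) := by
  intro μ ν h
  ext1
  · funext k; exact Fin.ext (by simpa using congrFun h (Fin.castAdd n k))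
  · ext k
    have := congrFun h (Fin.natAdd m k)
    simp only [expOf_natAdd] at this
    split_ifs at this <;> simp_all

lemma exists_expOf_eq [NeZero p] {e : Fin (m + n) → ℕ} (he : e ≤ maxExp p m n) :
    ∃ μ : Mon p m n, expOf μ = e := by
  refine ⟨(fun k => ⟨e (Fin.castAdd n k), ?_⟩, univ.filter fun k => e (Fin.natAdd m k) = 1), ?_⟩
  · have := he (Fin.castAdd n k)
    have := NeZero.pos p
    simp at *
    omega
  · funext j
    induction j using Fin.addCases with
    | left k => simp
    | right k =>
      have := he (Fin.natAdd m k)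
      simp at *
      split_ifs <;> omega

lemma zdMon_eq_sum_expOf (μ : Mon p m n) : zdMon μ = ∑ j, expOf μ j := by
  simp [zdMon, Fin.sum_univ_add]

lemma zdMon_add_sum_eq {κ ν : Mon p m n} {e f : Fin (m + n) → ℕ}
    (h : expOf κ + e = expOf ν + f) : zdMon κ + ∑ j, e j = zdMon ν + ∑ j, f j := by
  simpa [zdMon_eq_sum_expOf, Finset.sum_add_distrib] using congrArg (fun g => ∑ j, g j) h

lemma add_single_le_maxExp (hp : 2 ≤ p) {ν : Mon p m n} {e : Fin (m + n) → ℕ}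
    {s : Fin (m + n)} (he : e ≤ expOf ν) (hs : e s = 0) : e + Pi.single s 1 ≤ maxExp p m n := by
  intro j
  by_cases hj : j = s
  · subst hj; simpa [hs] using one_le_maxExp hp j
  · simpa [hj] using (he j).trans (expOf_le_maxExp ν j)

section QuadFactor

variable {ι : Type*} [DecidableEq ι]

/-- `x_t x_s ∣ x^e` for some `t, s ≠ i`, where `t = s` is allowed. -/
def HasQuadFactorAway (i : ι) (e : ι → ℕ) : Prop :=
  ∃ t s, t ≠ i ∧ s ≠ i ∧ Pi.single t 1 + Pi.single s 1 ≤ e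

lemma single_add_single_le_iff {t s : ι} {e : ι → ℕ} (hts : t ≠ s) :
    Pi.single t 1 + Pi.single s 1 ≤ e ↔ 1 ≤ e t ∧ 1 ≤ e s := by
  refine ⟨fun h => ⟨by simpa [hts] using h t, by simpa [hts.symm] using h s⟩,
    fun ⟨ht, hs⟩ j => ?_⟩
  simp only [Pi.add_apply, Pi.single_apply]
  split_ifs with hjt hjs <;> subst_vars <;> simp_all

lemma single_add_self_le_iff {t : ι} {e : ι → ℕ} :
    Pi.single t 1 + Pi.single t 1 ≤ e ↔ 2 ≤ e t := by
  refine ⟨fun h => by simpa using h t, fun h j => ?_⟩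
  simp only [Pi.add_apply, Pi.single_apply]
  split_ifs with hjt <;> subst_vars <;> omega

variable [Fintype ι] {i : ι} {e : ι → ℕ}

lemma sum_erase_le_one_of_not_hasQuadFactorAway (h : ¬ HasQuadFactorAway i e) :
    ∑ j ∈ Finset.univ.erase i, e j ≤ 1 := by
  have hle : ∀ t ≠ i, e t ≤ 1 := fun t hti => by
    by_contra! ht
    exact h ⟨t, t, hti, hti, single_add_self_le_iff.mpr ht⟩
  by_cases hex : ∃ t ∈ Finset.univ.erase i, 1 ≤ e t
  · obtain ⟨t, ht, het⟩ := hex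
    have hti := Finset.ne_of_mem_erase ht
    rw [Finset.sum_eq_single_of_mem t ht fun s hs hst => ?_]
    · exact hle t hti
    by_contra! hes
    exact h ⟨t, s, hti, Finset.ne_of_mem_erase hs, (single_add_single_le_iff (Ne.symm hst)).mpr
      ⟨het, Nat.one_le_iff_ne_zero.mpr hes⟩⟩
  · push Not at hex
    rw [Finset.sum_eq_zero fun j hj => Nat.lt_one_iff.mp (hex j hj)]
    omega

lemma two_le_of_not_hasQuadFactorAway (h : ¬ HasQuadFactorAway i e) (hd : 3 ≤ ∑ j, e j) :
    2 ≤ e i := by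
  have := sum_erase_le_one_of_not_hasQuadFactorAway h
  rw [← Finset.add_sum_erase _ _ (Finset.mem_univ i)] at hd
  omega

lemma exists_ne_eq_zero_of_not_hasQuadFactorAway (hι : 3 ≤ Fintype.card ι)
    (h : ¬ HasQuadFactorAway i e) : ∃ s ≠ i, e s = 0 := by
  have hcard : 1 < (Finset.univ.erase i).card := by
    rw [Finset.card_erase_of_mem (Finset.mem_univ i), Finset.card_univ]; omega
  obtain ⟨a, ha, b, hb, hab⟩ := Finset.one_lt_card.mp hcard
  have hai := Finset.ne_of_mem_erase ha
  have hbi := Finset.ne_of_mem_erase hb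
  by_contra! hne
  exact h ⟨a, b, hai, hbi, (single_add_single_le_iff hab).mpr
    ⟨Nat.one_le_iff_ne_zero.mpr (hne a hai), Nat.one_le_iff_ne_zero.mpr (hne b hbi)⟩⟩

lemma hasQuadFactorAway_sub_single_add_single (h : ¬ HasQuadFactorAway i e) (hd : 3 ≤ ∑ j, e j)
    {s : ι} (hsi : s ≠ i) (hs : e s = 0) :
    HasQuadFactorAway s (e - Pi.single i 1 + Pi.single s 1) := by
  have hi2 := two_le_of_not_hasQuadFactorAway h hd
  have hi : (e - Pi.single i 1 + Pi.single s 1 : ι → ℕ) i = e i - 1 := by simp [hsi.symm]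
  by_cases hi3 : 3 ≤ e i
  · exact ⟨i, i, hsi.symm, hsi.symm, single_add_self_le_iff.mpr (by omega)⟩
  obtain ⟨t, ht, het⟩ : ∃ t ∈ Finset.univ.erase i, 1 ≤ e t := by
    by_contra! hz
    rw [← Finset.add_sum_erase _ _ (Finset.mem_univ i),
      Finset.sum_eq_zero fun j hj => Nat.lt_one_iff.mp (hz j hj)] at hd
    omega
  have hti := Finset.ne_of_mem_erase ht
  have hts : t ≠ s := by rintro rfl; omega
  refine ⟨t, i, hts, hsi.symm, (single_add_single_le_iff hti).mpr ⟨?_, by omega⟩⟩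
  simpa [hti, hts] using het

end QuadFactor

lemma dOd_single_one_apply (k : Fin n) (B μ : Mon p m n) :
    dOd k (Pi.single B (1 : F)) μ =
      if expOf μ + Pi.single (Fin.natAdd m k) 1 = expOf B
      then (-1) ^ (μ.2.filter fun j => j < k).card else 0 := by
  by_cases hk : k ∈ μ.2
  · rw [dOd, if_pos hk, if_neg fun h => ?_]
    have := congrFun h (Fin.natAdd m k)
    simp [hk] at this
    split_ifs at this; omega
  · have hraise : expOf (μ.1, insert k μ.2) = expOf μ + Pi.single (Fin.natAdd m k) 1 := by
      funext j
      induction j using Fin.addCases <;> simp [Pi.single_apply]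
      split_ifs <;> simp_all
    simp only [dOd, if_neg hk, Pi.single_apply, ← expOf_injective.eq_iff, hraise, mul_ite,
      mul_one, mul_zero]

section Action

variable [NeZero p]

lemma dEv_single_one_apply (k : Fin m) (B μ : Mon p m n) :
    dEv k (Pi.single B (1 : F)) μ =
      if expOf μ + Pi.single (Fin.castAdd n k) 1 = expOf B then 1 else 0 := by
  by_cases hk : μ.1 k + 1 < p
  · have hraise : expOf (Function.update μ.1 k ⟨μ.1 k + 1, hk⟩, μ.2)
        = expOf μ + Pi.single (Fin.castAdd n k) 1 := by
      funext j
      induction j using Fin.addCases <;> simp [Function.update_apply, Pi.single_apply]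
      split_ifs <;> simp_all
    simp only [dEv, dif_pos hk, Pi.single_apply, ← expOf_injective.eq_iff, hraise]
  · rw [dEv, dif_neg hk, if_neg fun h => ?_]
    have := congrFun h (Fin.castAdd n k)
    simp at this
    omega

@[simp] lemma mulO_zero_left (g : O F p m n) : mulO 0 g = 0 := by
  funext μ; simp [mulO]

@[simp] lemma mulO_zero_right (f : O F p m n) : mulO f 0 = 0 := by
  funext μ; simp [mulO]

lemma mulO_smul_right (c : F) (f g : O F p m n) : mulO f (c • g) = c • mulO f g := by
  funext μ
  simp only [mulO, Pi.smul_apply, smul_eq_mul, Finset.mul_sum, mul_ite, mul_zero]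
  congr! 3 with ν _ κ _
  ring

@[simp] lemma pd_castAdd (k : Fin m) (f : O F p m n) : pd (Fin.castAdd n k) f = dEv k f := by
  simp [pd]

@[simp] lemma pd_natAdd (k : Fin n) (f : O F p m n) : pd (Fin.natAdd m k) f = dOd k f := by
  simp [pd]

@[simp] lemma pd_zero (l : Fin (m + n)) : pd l (0 : O F p m n) = 0 := by
  induction l using Fin.addCases <;> funext μ <;> simp [dEv, dOd]

lemma act_single (l : Fin (m + n)) (f g : O F p m n) :
    act (Pi.single l f : W F p m n) g = mulO f (pd l g) := by
  rw [act, Fintype.sum_eq_single l fun j hj => by simp [hj]]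
  simp

@[simp] lemma act_zero_left (g : O F p m n) : act (0 : W F p m n) g = 0 := by
  simp [act]

@[simp] lemma act_zero_right (D : W F p m n) : act D 0 = 0 := by
  simp [act]

lemma pd_single_one {l : Fin (m + n)} {B C : Mon p m n} (h : expOf C + Pi.single l 1 = expOf B) :
    ∃ c : F, c ≠ 0 ∧ pd l (Pi.single B 1) = c • (Pi.single C 1 : O F p m n) := by
  induction l using Fin.addCases with
  | left k =>
    refine ⟨1, one_ne_zero, funext fun μ => ?_⟩
    simp [dEv_single_one_apply, ← h, Pi.single_apply, expOf_injective.eq_iff]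
  | right k =>
    refine ⟨(-1) ^ (C.2.filter fun j => j < k).card, by simp, funext fun μ => ?_⟩
    simp only [pd_natAdd, dOd_single_one_apply, ← h, add_left_inj, expOf_injective.eq_iff,
      Pi.smul_apply, Pi.single_apply, smul_eq_mul, mul_ite, mul_one, mul_zero]
    split_ifs with hμ <;> simp [hμ]

lemma pd_single_one_eq_zero {l : Fin (m + n)} {B : Mon p m n} (h : expOf B l = 0) :
    pd l (Pi.single B (1 : F)) = 0 := by
  funext μ
  have hne : expOf μ + Pi.single l 1 ≠ expOf B := fun h' => by simpa [h] using congrFun h' l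
  induction l using Fin.addCases <;> simp [dEv_single_one_apply, dOd_single_one_apply, hne]

end Action

section Parity

lemma projO_of_isParO {b : ZMod 2} {f : O F p m n} (hf : isParO b f) (b' : ZMod 2) :
    projO b' f = if b' = b then f else 0 := by
  funext μ
  by_cases hμ : f μ = 0
  · by_cases hb : b' = b <;> simp [projO, hμ, hb]
  · rw [projO, hf μ hμ]
    by_cases hb : b' = b
    · simp [hb]
    · simp [hb, Ne.symm hb]

lemma isParO_single_one (ν : Mon p m n) : isParO (parMon ν) (Pi.single ν (1 : F)) := by
  intro μ h
  rw [Pi.single_apply] at h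
  split_ifs at h with hμ
  · rw [hμ]
  · exact absurd rfl h

lemma isParW_single {a : ZMod 2} {f : O F p m n} (l : Fin (m + n)) (hf : isParO a f) :
    isParW (a + parIdx m l) (Pi.single l f : W F p m n) := by
  intro k
  by_cases hk : k = l
  · subst hk
    have hchar : ∀ x y : ZMod 2, x + y + y = x := by decide
    simpa [hchar] using hf
  · intro μ h
    simp [hk] at h

lemma projW_of_isParW {a : ZMod 2} {D : W F p m n} (hD : isParW a D) (a' : ZMod 2) :
    projW a' D = if a' = a then D else 0 := by
  funext k
  simp only [projW, projO_of_isParO (hD k), add_left_inj]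
  split_ifs <;> rfl

variable [NeZero p]

lemma bracketW_of_isParW {a b : ZMod 2} {D E : W F p m n} (hD : isParW a D) (hE : isParW b E) :
    bracketW D E = fun k => act D (E k) - (-1 : F) ^ (a * b).val • act E (D k) := by
  simp only [bracketW, projW_of_isParW hD, projW_of_isParW hE]
  rw [Fintype.sum_eq_single a fun a' ha => by funext k; simp [ha],
    Fintype.sum_eq_single b fun b' hb => by funext k; simp [hb]]
  simp

lemma bracketW_single {a b : ZMod 2} {f g : O F p m n} (hf : isParO a f) (hg : isParO b g)
    (l i : Fin (m + n)) :
    bracketW (Pi.single l f) (Pi.single i g) =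
      Pi.single i (mulO f (pd l g)) - (-1 : F) ^ ((a + parIdx m l) * (b + parIdx m i)).val •
        (Pi.single l (mulO g (pd i f)) : W F p m n) := by
  rw [bracketW_of_isParW (isParW_single l hf) (isParW_single i hg)]
  funext k
  simp only [act_single, Pi.sub_apply, Pi.smul_apply]
  congr 2
  · by_cases hk : k = i <;> simp [hk]
  · by_cases hk : k = l <;> simp [hk]

end Parity

section LocalPart

def localPart (F : Type*) [Field F] (p m n : ℕ) : Set (W F p m n) :=
  {E | inW (-1) E ∨ inW 0 E ∨ inW 1 E}

/-- The field `x^(ν) ∂_i`. -/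
def monW (i : Fin (m + n)) (ν : Mon p m n) : W F p m n := Pi.single i (Pi.single ν 1)

lemma inW_monW (i : Fin (m + n)) (ν : Mon p m n) : inW (zdMon ν - 1) (monW (F := F) i ν) := by
  intro k μ h
  by_cases hk : k = i
  · subst hk
    by_cases hμ : μ = ν
    · rw [hμ]; ring
    · simp [monW, hμ] at h
  · simp [monW, hk] at h

lemma monW_mem_localPart {ν : Mon p m n} (h : zdMon ν ≤ 2) (i : Fin (m + n)) :
    monW (F := F) i ν ∈ localPart F p m n := by
  have := inW_monW (F := F) i ν
  interval_cases hν : zdMon ν <;> norm_num at this <;> simp [localPart, this]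

lemma eq_sum_smul_monW (D : W F p m n) : D = ∑ i, ∑ ν, D i ν • monW i ν := by
  funext i μ
  simp [monW, Finset.sum_apply, Pi.single_apply, apply_ite (fun f : O F p m n => f μ)]

variable [NeZero p]

lemma genBy_sum {S : Set (W F p m n)} {ι : Type*} (s : Finset ι) {f : ι → W F p m n}
    (h : ∀ x ∈ s, genBy S (f x)) : genBy S (∑ x ∈ s, f x) :=
  Finset.sum_induction f _ (fun _ _ => genBy.add) genBy.zero h

lemma genBy_of_smul {S : Set (W F p m n)} {c : F} (hc : c ≠ 0) {x : W F p m n}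
    (h : genBy S (c • x)) : genBy S x := by
  simpa [smul_smul, inv_mul_cancel₀ hc] using genBy.smul c⁻¹ h

end LocalPart

section Generation

variable [Fact p.Prime] [CharP F p]

lemma cast_choose_ne_zero {a b : ℕ} (hb : b < p) (ha : a ≤ b) :
    ((b.choose a : ℕ) : F) ≠ 0 := by
  rw [Ne, CharP.cast_eq_zero_iff F p]
  exact (Nat.Prime.coprime_iff_not_dvd Fact.out).mp (Nat.Prime.coprime_choose_of_lt Fact.out hb ha)

lemma mulO_single_one {A B C : Mon p m n} (h : expOf C = expOf A + expOf B) :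
    ∃ c : F, c ≠ 0 ∧
      mulO (Pi.single A 1) (Pi.single B 1) = c • (Pi.single C 1 : O F p m n) := by
  have hcond : ∀ μ : Mon p m n, ((∀ k, (A.1 k : ℕ) + B.1 k = μ.1 k) ∧
      A.2 ∩ B.2 = ∅ ∧ A.2 ∪ B.2 = μ.2) ↔ μ = C := by
    intro μ
    rw [← expOf_injective.eq_iff, h, funext_iff, Fin.forall_fin_add]
    simp only [expOf_castAdd, expOf_natAdd, Pi.add_apply, Finset.ext_iff,
      Finset.mem_inter, Finset.mem_union, ← forall_and]
    refine and_congr (forall_congr' fun k => eq_comm) (forall_congr' fun k => ?_)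
    by_cases hA : k ∈ A.2 <;> by_cases hB : k ∈ B.2 <;> by_cases hμ : k ∈ μ.2 <;>
      simp [hA, hB, hμ]
  refine ⟨((extSign A.2 B.2 : ℤ) : F) * ∏ k, ((C.1 k : ℕ).choose (A.1 k) : F), ?_,
    funext fun μ => ?_⟩
  · refine mul_ne_zero (by simp [extSign]) (Finset.prod_ne_zero_iff.mpr fun k _ => ?_)
    refine cast_choose_ne_zero (C.1 k).isLt ?_
    have := congrFun h (Fin.castAdd n k)
    simp at this
    omega
  · rw [mulO, Fintype.sum_eq_single A fun ν hν => Finset.sum_eq_zero fun κ _ => by simp [hν],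
      Fintype.sum_eq_single B fun κ hκ => by simp [hκ]]
    simp only [Pi.single_eq_same, mul_one, Pi.smul_apply, smul_eq_mul, Pi.single_apply, hcond]
    split_ifs with hμ
    · subst hμ; rw [mul_one]
    · rw [mul_zero]

lemma mulO_pd_single_one {A B ν : Mon p m n} {l : Fin (m + n)} (hBl : 1 ≤ expOf B l)
    (hν : expOf ν = expOf A + (expOf B - Pi.single l 1)) :
    ∃ c : F, c ≠ 0 ∧
      mulO (Pi.single A 1) (pd l (Pi.single B 1)) = c • (Pi.single ν 1 : O F p m n) := by
  obtain ⟨C, hC⟩ := exists_expOf_eq (tsub_le_self.trans (expOf_le_maxExp B))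
  have hl : Pi.single l 1 ≤ expOf B := fun j => by by_cases hj : j = l <;> simp [hj, hBl]
  obtain ⟨c₁, hc₁, hpd⟩ := pd_single_one (F := F) (hC ▸ tsub_add_cancel_of_le hl)
  obtain ⟨c₂, hc₂, hmul⟩ :=
    mulO_single_one (F := F) (A := A) (B := C) (hν.trans (by rw [hC]))
  exact ⟨c₁ * c₂, mul_ne_zero hc₁ hc₂, by rw [hpd, mulO_smul_right, hmul, smul_smul]⟩

/-- `[x^(A) ∂_l, x^(B) ∂_i]` is a nonzero multiple of `x^(ν) ∂_i` minus a multiple of the field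
in `hrest`. -/
lemma genBy_monW_of_bracket {S : Set (W F p m n)} {A B ν : Mon p m n} {l i : Fin (m + n)}
    (hA : monW l A ∈ S) (hB : genBy S (monW i B)) (hBl : 1 ≤ expOf B l)
    (hν : expOf ν = expOf A + (expOf B - Pi.single l 1))
    (hrest : genBy S (Pi.single l (mulO (Pi.single B 1) (pd i (Pi.single A 1))) : W F p m n)) :
    genBy S (monW i ν) := by
  obtain ⟨c, hc, hmul⟩ := mulO_pd_single_one (F := F) hBl hν
  have hbr := bracketW_single (isParO_single_one (F := F) A) (isParO_single_one B) l i
  rw [hmul, Pi.single_smul] at hbr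
  refine genBy_of_smul hc ?_
  rw [monW, ← sub_add_cancel (c • _) ((_ : F) • _), ← hbr]
  exact (genBy.br (genBy.base hA) hB).add (genBy.smul _ hrest)

lemma genBy_monW_of_hasQuadFactorAway {ν : Mon p m n} {i : Fin (m + n)}
    (IH : ∀ κ j, zdMon κ < zdMon ν → genBy (localPart F p m n) (monW j κ))
    (h : HasQuadFactorAway i (expOf ν)) : genBy (localPart F p m n) (monW i ν) := by
  obtain ⟨t, s, hti, hsi, hts⟩ := h
  have hs : Pi.single s 1 ≤ expOf ν := le_add_self.trans hts
  obtain ⟨A, hA⟩ := exists_expOf_eq (hts.trans (expOf_le_maxExp ν))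
  obtain ⟨B, hB⟩ := exists_expOf_eq (tsub_le_self.trans (expOf_le_maxExp ν) :
    expOf ν - Pi.single s 1 ≤ maxExp p m n)
  refine genBy_monW_of_bracket (l := t) (A := A) (B := B) (monW_mem_localPart ?_ t) (IH B i ?_)
    ?_ ?_ ?_
  · simp [zdMon_eq_sum_expOf, hA, Finset.sum_add_distrib]
  · have := zdMon_add_sum_eq (f := 0) (hB ▸ (tsub_add_cancel_of_le hs).trans (add_zero _).symm)
    simp at this
    omega
  · have := hts t
    by_cases hst : s = t <;> simp [hB, hst] at this ⊢ <;> omega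
  · funext j
    have := hts j
    simp only [hA, hB, Pi.add_apply, Pi.sub_apply, Pi.single_apply] at this ⊢
    split_ifs at this ⊢ <;> omega
  · rw [pd_single_one_eq_zero (by simp [hA, hti.symm, hsi.symm]), mulO_zero_right, Pi.single_zero]
    exact genBy.zero

lemma genBy_monW_of_shift {ν N : Mon p m n} {i s : Fin (m + n)} (hsi : s ≠ i)
    (hs : expOf ν s = 0) (hi : 2 ≤ expOf ν i)
    (hN : expOf N = expOf ν - Pi.single i 1 + Pi.single s 1)
    (IH : ∀ κ j, zdMon κ < zdMon ν → genBy (localPart F p m n) (monW j κ))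
    (hNgen : genBy (localPart F p m n) (monW s N)) : genBy (localPart F p m n) (monW i ν) := by
  obtain ⟨A, hA⟩ := exists_expOf_eq
    ((single_add_self_le_iff.mpr hi).trans (expOf_le_maxExp ν))
  obtain ⟨B, hB⟩ := exists_expOf_eq (add_single_le_maxExp (s := s) (Fact.out : p.Prime).two_le
    (tsub_le_self : expOf ν - (Pi.single i 1 + Pi.single i 1) ≤ _) (by simp [hs]))
  refine genBy_monW_of_bracket (l := s) (A := A) (B := B) (monW_mem_localPart ?_ s) (IH B i ?_)
    ?_ ?_ ?_
  · simp [zdMon_eq_sum_expOf, hA, Finset.sum_add_distrib]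
  · have := zdMon_add_sum_eq (e := Pi.single i 1 + Pi.single i 1) (f := Pi.single s 1)
      (κ := B) (ν := ν) (by
      funext j
      simp only [hB, Pi.add_apply, Pi.sub_apply, Pi.single_apply]
      split_ifs <;> simp_all)
    simp [Finset.sum_add_distrib] at this
    omega
  · simp [hB]
  · funext j
    simp only [hA, hB, Pi.add_apply, Pi.sub_apply, Pi.single_apply]
    split_ifs <;> simp_all
  · obtain ⟨c, -, hmul⟩ := mulO_pd_single_one (F := F) (A := B) (B := A) (l := i) (ν := N)
      (by simp [hA]) (by
        funext j
        simp only [hA, hB, hN, Pi.add_apply, Pi.sub_apply, Pi.single_apply]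
        split_ifs <;> simp_all)
    rw [hmul, Pi.single_smul]
    exact genBy.smul c hNgen

lemma genBy_monW_of_not_hasQuadFactorAway (hmn : 3 ≤ m + n) {ν : Mon p m n} {i : Fin (m + n)}
    (IH : ∀ κ j, zdMon κ < zdMon ν → genBy (localPart F p m n) (monW j κ))
    (hd : 3 ≤ zdMon ν) (h : ¬ HasQuadFactorAway i (expOf ν)) :
    genBy (localPart F p m n) (monW i ν) := by
  have hd' : 3 ≤ ∑ j, expOf ν j := zdMon_eq_sum_expOf ν ▸ hd
  have hi := two_le_of_not_hasQuadFactorAway h hd'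
  obtain ⟨s, hsi, hs⟩ := exists_ne_eq_zero_of_not_hasQuadFactorAway (by simpa using hmn) h
  obtain ⟨N, hN⟩ := exists_expOf_eq (add_single_le_maxExp (s := s) (Fact.out : p.Prime).two_le
    (tsub_le_self : expOf ν - Pi.single i 1 ≤ _) (by simp [hs]))
  have hzdN : zdMon N = zdMon ν := by
    have := zdMon_add_sum_eq (e := Pi.single i 1) (f := Pi.single s 1) (κ := N) (ν := ν) (by
      funext j
      simp only [hN, Pi.add_apply, Pi.sub_apply, Pi.single_apply]
      split_ifs <;> simp_all
      omega)
    simpa using this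
  refine genBy_monW_of_shift hsi hs hi hN IH ?_
  exact genBy_monW_of_hasQuadFactorAway (fun κ j hκ => IH κ j (hzdN ▸ hκ))
    (hN ▸ hasQuadFactorAway_sub_single_add_single h hd' hsi hs)

theorem genBy_localPart_monW (hmn : 3 ≤ m + n) (ν : Mon p m n) (i : Fin (m + n)) :
    genBy (localPart F p m n) (monW i ν) := by
  have IH : ∀ κ j, zdMon κ < zdMon ν → genBy (localPart F p m n) (monW j κ) :=
    fun κ j _ => genBy_localPart_monW hmn κ j
  by_cases hd : zdMon ν ≤ 2
  · exact genBy.base (monW_mem_localPart hd i)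
  by_cases hq : HasQuadFactorAway i (expOf ν)
  · exact genBy_monW_of_hasQuadFactorAway IH hq
  · exact genBy_monW_of_not_hasQuadFactorAway hmn IH (by omega) hq
termination_by zdMon ν

end Generation

theorem W_generated_by_local_part_general (F : Type*) [Field F] (p m n : ℕ) [Fact p.Prime]
    [CharP F p] (hm : 2 ≤ m) (hn : 2 ≤ n) (D : W F p m n) :
    genBy {E : W F p m n | inW (-1) E ∨ inW 0 E ∨ inW 1 E} D := by
  rw [eq_sum_smul_monW D]
  exact genBy_sum _ fun i _ => genBy_sum _ fun ν _ =>
    genBy.smul _ (genBy_localPart_monW (by omega) ν i)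

/-- `W(m,n)` is generated by its local part `W₋₁ ⊕ W₀ ⊕ W₁`. -/
theorem W_generated_by_local_part (F : Type*) [Field F] (p m n : ℕ) [Fact p.Prime]
    [CharP F p] (hp : 3 < p) (hm : 2 ≤ m) (hn : 2 ≤ n) (D : W F p m n) :
    genBy {E : W F p m n | inW (-1) E ∨ inW 0 E ∨ inW 1 E} D :=
  W_generated_by_local_part_general F p m n hm hn D

end Cartan
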